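/- For every n ≥ 2 and every h with 1 ≤ h ≤ n−2, the number of bargraphs of semiperimeter n whose leftmost horizontal segment has width h equals the number of bargraphs of semiperimeter n having exactly h−1 initial columns of height 1. -/

import Mathlib

/-- Steps of bargraphs / Motzkin paths. -/
inductive Step where
  | U : Step
  | H : Step
  | D : Step
deriving DecidableEq

/-- Vertical displacement of a step. -/
def Step.val : Step → ℤ
  | .U => 1
  | .H => 0
  | .D => -1

/-- Mirror of a step (swap U and D). -/
def Step.mirror : Step → Step
  | .U => .D
  | .H => .H
  | .D => .U

/-- Final height of a word. -/
def hgt (w : List Step) : ℤ := (w.map Step.val).sum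

/-- A Motzkin path prefix: never goes below the x-axis. -/
def IsMotzkinPrefix (w : List Step) : Prop := ∀ p : List Step, p <+: w → 0 ≤ hgt p

/-- A Motzkin path: never below the x-axis, ends at height 0. -/
def IsMotzkin (w : List Step) : Prop := IsMotzkinPrefix w ∧ hgt w = 0

/-- No peak `UD` and no valley `DU`. -/
def Cornerless (w : List Step) : Prop :=
  ¬ [Step.U, Step.D] <:+: w ∧ ¬ [Step.D, Step.U] <:+: w

/-- A bargraph: starts at the origin, ends on the x-axis, stays strictly above the
x-axis except at the endpoints, and has no factor `UD` or `DU`. -/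
def IsBargraph (w : List Step) : Prop :=
  2 ≤ w.length ∧ hgt w = 0 ∧
    (∀ p : List Step, p <+: w → p ≠ [] → p ≠ w → 0 < hgt p) ∧ Cornerless w

/-- Semiperimeter: number of `U` steps plus number of `H` steps. -/
def semi (w : List Step) : ℕ := w.count Step.U + w.count Step.H

/-- Length of the initial run of `U` steps. -/
def leadU : List Step → ℕ
  | Step.U :: rest => leadU rest + 1
  | _ => 0

/-- Length of the initial run of `H` steps. -/
def leadH : List Step → ℕ
  | Step.H :: rest => leadH rest + 1
  | _ => 0

/-- Length of the initial run of `D` steps. -/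
def leadD : List Step → ℕ
  | Step.D :: rest => leadD rest + 1
  | _ => 0

/-- Length of the first maximal run of `D` steps (0 if none). -/
def firstDescLen : List Step → ℕ
  | [] => 0
  | Step.D :: rest => leadD rest + 1
  | _ :: rest => firstDescLen rest

/-- Number of occurrences of the two-letter factor `a b`. -/
def cnt2 (a b : Step) : List Step → ℕ
  | x :: y :: rest => (if x = a ∧ y = b then 1 else 0) + cnt2 a b (y :: rest)
  | _ => 0

/-- Heights of the columns (`H` steps), starting from a given height. -/
def colHeights : ℤ → List Step → List ℤ
  | _, [] => []
  | h, Step.U :: rest => colHeights (h + 1) rest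
  | h, Step.H :: rest => h :: colHeights h rest
  | h, Step.D :: rest => colHeights (h - 1) rest

/-- Width of the leftmost maximal horizontal segment (0 if none). -/
def lhsW : List Step → ℕ
  | [] => 0
  | Step.H :: rest => leadH rest + 1
  | _ :: rest => lhsW rest

/-- Delete `h` steps at the start of the leftmost horizontal segment. -/
def stripLeadH (h : ℕ) : List Step → List Step
  | [] => []
  | Step.H :: rest => List.drop h (Step.H :: rest)
  | s :: rest => s :: stripLeadH h rest

/-- Number of initial columns of height 1: largest `j` such that the word begins `U H^j`. -/
def iuc : List Step → ℕ
  | Step.U :: rest => leadH rest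
  | _ => 0

/-- Number of maximal horizontal segments. -/
def hsCount : List Step → ℕ
  | [] => 0
  | [Step.H] => 1
  | [_] => 0
  | a :: b :: rest => (if a = Step.H ∧ b ≠ Step.H then 1 else 0) + hsCount (b :: rest)

/-- Mirror image: reverse the word and swap `U` with `D`. -/
def mir (w : List Step) : List Step := (w.reverse).map Step.mirror

/-- Shape of strictly alternating bargraphs:
`U^{i₁} H D^{k₁} H U^{i₂} H D^{k₂} H ⋯ U^{iₘ} H D^{kₘ}` with all `iᵣ, kᵣ ≥ 1`. -/
inductive SAShape : List Step → Prop where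
  | base (i k : ℕ) : 1 ≤ i → 1 ≤ k →
      SAShape (List.replicate i Step.U ++ [Step.H] ++ List.replicate k Step.D)
  | cons (i k : ℕ) (w : List Step) : 1 ≤ i → 1 ≤ k → SAShape w →
      SAShape (List.replicate i Step.U ++ [Step.H] ++ List.replicate k Step.D ++ [Step.H] ++ w)

/-- A strictly alternating bargraph. -/
def IsStrictAlt (w : List Step) : Prop := IsBargraph w ∧ SAShape w

/-- A secondary structure on `{0, …, m-1}`: all consecutive edges are present, every
vertex has at most one non-consecutive neighbour, and there are no crossing edges. -/
def IsSecondaryStructure {m : ℕ} (G : SimpleGraph (Fin m)) : Prop :=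
  (∀ i j : Fin m, (i : ℕ) + 1 = (j : ℕ) → G.Adj i j) ∧
  (∀ i j k : Fin m, G.Adj i j → G.Adj i k →
      (i : ℕ) + 1 ≠ (j : ℕ) → (j : ℕ) + 1 ≠ (i : ℕ) →
      (i : ℕ) + 1 ≠ (k : ℕ) → (k : ℕ) + 1 ≠ (i : ℕ) → j = k) ∧
  ¬ ∃ i j k l : Fin m, (i : ℕ) < (j : ℕ) ∧ (j : ℕ) < (k : ℕ) ∧ (k : ℕ) < (l : ℕ) ∧
      G.Adj i k ∧ G.Adj j l

/-- Generating function of bargraphs: `x` (variable 0) marks `H` steps,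
`y` (variable 1) marks `U` steps. -/
noncomputable def BG : MvPowerSeries (Fin 2) ℚ :=
  fun d => (Nat.card {w : List Step //
    IsBargraph w ∧ w.count Step.H = d 0 ∧ w.count Step.U = d 1} : ℚ)

/-- Generating function of cornerless Motzkin paths. -/
noncomputable def MG : MvPowerSeries (Fin 2) ℚ :=
  fun d => (Nat.card {w : List Step //
    IsMotzkin w ∧ Cornerless w ∧ w.count Step.H = d 0 ∧ w.count Step.U = d 1} : ℚ)

/-- Generating function of bargraphs avoiding the factor `DH`. -/
noncomputable def BDH : MvPowerSeries (Fin 2) ℚ :=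
  fun d => (Nat.card {w : List Step //
    IsBargraph w ∧ ¬ [Step.D, Step.H] <:+: w ∧
      w.count Step.H = d 0 ∧ w.count Step.U = d 1} : ℚ)

/-- Generating function of bargraphs avoiding the factors `DH` and `HH`. -/
noncomputable def BDHHH : MvPowerSeries (Fin 2) ℚ :=
  fun d => (Nat.card {w : List Step //
    IsBargraph w ∧ ¬ [Step.D, Step.H] <:+: w ∧ ¬ [Step.H, Step.H] <:+: w ∧
      w.count Step.H = d 0 ∧ w.count Step.U = d 1} : ℚ)

/-- Generating function of cornerless Motzkin path prefixes ending at height `h`. -/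
noncomputable def Pgf (h : ℕ) : MvPowerSeries (Fin 2) ℚ :=
  fun d => (Nat.card {w : List Step //
    IsMotzkinPrefix w ∧ Cornerless w ∧ hgt w = (h : ℤ) ∧
      w.count Step.H = d 0 ∧ w.count Step.U = d 1} : ℚ)

/-- Decomposition `G = U^a G₁ H G₂ D^a` of a strictly alternating bargraph. -/
def SADecomp (t : ℕ × List Step × List Step) (G : List Step) : Prop :=
  1 ≤ t.1 ∧ IsStrictAlt t.2.1 ∧ IsStrictAlt (Step.U :: (t.2.2 ++ [Step.D])) ∧
    G = List.replicate t.1 Step.U ++ t.2.1 ++ [Step.H] ++ t.2.2 ++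
      List.replicate t.1 Step.D

/-!
A bargraph whose leftmost horizontal segment has width `k + 1` reads `U^a H^(k+1) x` with `x` not
starting with `H`. If `a ≥ 2` it is sent to `U H^k U^(a-1) H x`. If `a = 1` the bargraph cannot be
`U H^(k+1) D` (its semiperimeter is too large), so it reads `U H^(k+1) U^c H y` and is sent to
`U H^k U^c H H y`. Both images begin with exactly `k` columns of height 1, followed by a rise and a
column, and the two cases are told apart by whether a second `H` follows that column. Each move only
replaces a `D`-free block `P` in `U P H x` by another of the same height, which preserves being a
bargraph.
-/

section
open List Step

attribute [local simp] count_replicate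

@[simp] theorem hgt_eq_count_sub_count (w : List Step) : hgt w = w.count U - w.count D := by
  induction w with
  | nil => rfl
  | cons s w ih => cases s <;> simp [hgt, Step.val] at ih ⊢ <;> omega

@[simp] theorem leadU_replicate_append (n : ℕ) (l : List Step) :
    leadU (replicate n U ++ l) = n + leadU l := by
  induction n with
  | zero => simp
  | succ n ih => simp [replicate_succ, leadU, ih]; omega

@[simp] theorem leadH_replicate_append (n : ℕ) (l : List Step) :
    leadH (replicate n H ++ l) = n + leadH l := by
  induction n with
  | zero => simp
  | succ n ih => simp [replicate_succ, leadH, ih]; omega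

theorem leadH_eq_zero {l : List Step} (h : l.head? ≠ some H) : leadH l = 0 := by
  rcases l with _ | ⟨_ | _ | _, _⟩ <;> simp_all [leadH]

theorem exists_eq_replicate_H_append (l : List Step) :
    ∃ j x, x.head? ≠ some H ∧ l = replicate j H ++ x := by
  induction l with
  | nil => exact ⟨0, [], by simp, rfl⟩
  | cons s l ih =>
    cases s
    case H =>
      obtain ⟨j, x, hx, rfl⟩ := ih
      exact ⟨j + 1, x, hx, by simp [replicate_succ]⟩
    all_goals exact ⟨0, _, by simp, rfl⟩

@[simp] theorem lhsW_replicate_U_append (n : ℕ) (l : List Step) :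
    lhsW (replicate n U ++ l) = lhsW l := by
  induction n with
  | zero => simp
  | succ n ih => simp [replicate_succ, lhsW, ih]

theorem infix_pair_append {a b : Step} {l r : List Step} (h : [a, b] <:+: l ++ r) :
    [a, b] <:+: l ∨ [a, b] <:+: r ∨ (l.getLast? = some a ∧ r.head? = some b) := by
  rcases infix_append_iff.mp h with h | h | ⟨l₁, l₂, hab, h₁, h₂⟩
  · exact .inl h
  · exact .inr (.inl h)
  · rcases l₁ with _ | ⟨a', _ | ⟨b', _ | _⟩⟩ <;> simp at hab
    · exact .inr (.inl (hab ▸ h₂.isInfix))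
    · obtain ⟨rfl, rfl⟩ := hab
      exact .inr (.inr ⟨singleton_suffix_iff_getLast?_eq_some.mp h₁,
        singleton_prefix_iff_head?_eq_some.mp h₂⟩)
    · obtain ⟨rfl, rfl, rfl⟩ := hab
      exact .inl h₁.isInfix

theorem cornerless_append_H_cons_iff {P x : List Step} (hD : D ∉ P) :
    Cornerless (P ++ H :: x) ↔ Cornerless x := by
  have pair_infix_iff : ∀ {a b : Step}, a ≠ H → b ≠ H → (a = D ∨ b = D) →
      ([a, b] <:+: P ++ H :: x ↔ [a, b] <:+: x) := by
    intro a b ha hb hab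
    refine ⟨fun h => ?_,
      fun h => infix_append_of_infix_right (h.trans (suffix_cons H x).isInfix)⟩
    rcases infix_pair_append h with h | h | ⟨-, h⟩
    · exact absurd (hab.elim (· ▸ h.subset (by simp)) (· ▸ h.subset (by simp))) hD
    · rcases infix_cons_iff.mp h with h | h
      · exact absurd (cons_prefix_cons.mp h).1 ha
      · exact h
    · exact absurd (Option.some.inj h).symm hb
  rw [Cornerless, Cornerless, pair_infix_iff (a := U) (b := D) nofun nofun (.inr rfl),
    pair_infix_iff (a := D) (b := U) nofun nofun (.inl rfl)]

theorem isBargraph_U_cons_append_H_cons_iff {P P' x : List Step} (hP : D ∉ P) (hP' : D ∉ P')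
    (hPP' : hgt P = hgt P') :
    IsBargraph (U :: (P ++ H :: x)) ↔ IsBargraph (U :: (P' ++ H :: x)) := by
  suffices transfer : ∀ {P P' : List Step}, D ∉ P → D ∉ P' → hgt P = hgt P' →
      IsBargraph (U :: (P ++ H :: x)) → IsBargraph (U :: (P' ++ H :: x)) from
    ⟨transfer hP hP' hPP', transfer hP' hP hPP'.symm⟩
  rintro P P' hP hP' hPP' ⟨-, hw, hpos, hc⟩
  simp only [hgt_eq_count_sub_count] at hPP'
  refine ⟨by simp; omega, ?_, fun p hp hne hpw => ?_, ?_⟩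
  · simp at hw ⊢
    omega
  · rw [show U :: (P' ++ H :: x) = U :: (P' ++ [H]) ++ x by simp] at hp hpw
    rcases prefix_or_prefix_of_prefix hp (prefix_append _ _) with hp' | ⟨q, rfl⟩
    · obtain ⟨t, rfl, ht⟩ := (prefix_cons_iff.mp hp').resolve_left hne
      have hDt : D ∉ t := fun h => by simpa [hP'] using ht.subset h
      simp [count_eq_zero_of_not_mem hDt]
    · have hq : q <+: x := (prefix_append_right_inj _).mp hp
      have hqx : q ≠ x := by rintro rfl; exact hpw rfl
      have := hpos (U :: (P ++ H :: q)) (by simpa using hq) (by simp) (by simpa using hqx)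
      simp at this ⊢
      omega
  · rw [← cons_append, cornerless_append_H_cons_iff (by simpa using hP')]
    rw [← cons_append, cornerless_append_H_cons_iff (by simpa using hP)] at hc
    exact hc

theorem IsBargraph.hgt_nonneg_of_prefix {w p : List Step} (hb : IsBargraph w) (hp : p <+: w) :
    0 ≤ hgt p := by
  rcases eq_or_ne p [] with rfl | hne
  · simp
  rcases eq_or_ne p w with rfl | hpw
  · exact hb.2.1.ge
  · exact (hb.2.2.1 p hp hne hpw).le

theorem IsBargraph.eq_of_prefix_of_hgt_eq_zero {w p : List Step} (hb : IsBargraph w)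
    (hp : p <+: w) (hne : p ≠ []) (h0 : hgt p = 0) : p = w := by
  by_contra hpw
  exact (hb.2.2.1 p hp hne hpw).ne' h0

theorem IsBargraph.exists_eq_U_cons {w : List Step} (hb : IsBargraph w) : ∃ q, w = U :: q := by
  obtain ⟨s, q, rfl⟩ : ∃ s q, w = s :: q := exists_cons_of_length_pos (by have := hb.1; omega)
  have hq : q ≠ [] := by rintro rfl; simpa using hb.1
  have := hb.2.2.1 [s] (by simp) (by simp) (by simpa using hq.symm)
  cases s <;> simp at this ⊢

theorem IsBargraph.exists_eq_replicate_U_append_H_cons {p q : List Step}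
    (hb : IsBargraph (p ++ U :: q)) : ∃ c y, q = replicate c U ++ H :: y := by
  induction q generalizing p with
  | nil =>
    have h₁ := hb.hgt_nonneg_of_prefix (prefix_append p _)
    have h₂ := hb.2.1
    simp at h₁ h₂
    omega
  | cons s q ih =>
    cases s with
    | U =>
      obtain ⟨c, y, rfl⟩ := ih (p := p ++ [U]) (by simpa using hb)
      exact ⟨c + 1, y, by simp [replicate_succ]⟩
    | H => exact ⟨0, q, rfl⟩
    | D => exact absurd (infix_append' p [U, D] q) (by simpa using hb.2.2.2.1)

theorem IsBargraph.exists_rise_after_unit_columns {k : ℕ} {x : List Step}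
    (hb : IsBargraph (U :: (replicate k H ++ x))) (hx : x.head? ≠ some H)
    (hs : k + 2 ≤ semi (U :: (replicate k H ++ x))) :
    ∃ c y, x = replicate (c + 1) U ++ H :: y := by
  rcases x with _ | ⟨_ | _ | _, r⟩
  · simpa using hb.2.1
  · obtain ⟨c, y, rfl⟩ := IsBargraph.exists_eq_replicate_U_append_H_cons
      (p := U :: replicate k H) (by simpa using hb)
    exact ⟨c, y, by simp [replicate_succ]⟩
  · simp at hx
  · have := hb.eq_of_prefix_of_hgt_eq_zero (p := U :: (replicate k H ++ [D])) (by simp)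
      (by simp) (by simp)
    obtain rfl : r = [] := by simpa using this.symm
    simp [semi] at hs
    omega

theorem IsBargraph.lhsW_shape {k : ℕ} {w : List Step} (hb : IsBargraph w)
    (hl : lhsW w = k + 1) (hs : k + 3 ≤ semi w) :
    (∃ a x, x.head? ≠ some H ∧ w = replicate (a + 2) U ++ replicate (k + 1) H ++ x) ∨
      ∃ c y, w = U :: (replicate (k + 1) H ++ replicate (c + 1) U ++ H :: y) := by
  obtain ⟨q, rfl⟩ := hb.exists_eq_U_cons
  obtain ⟨c, y, rfl⟩ := IsBargraph.exists_eq_replicate_U_append_H_cons (p := []) hb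
  obtain ⟨j, x, hx, rfl⟩ := exists_eq_replicate_H_append y
  obtain rfl : k = j := by
    simpa [lhsW, leadH_eq_zero hx] using hl.symm
  rcases c with _ | a
  · obtain ⟨c, y, rfl⟩ := IsBargraph.exists_rise_after_unit_columns (k := k + 1) (x := x)
      (by simpa [replicate_succ] using hb) hx (by simpa [replicate_succ] using hs)
    exact .inr ⟨c, y, by simp [replicate_succ]⟩
  · exact .inl ⟨a, x, hx, by simp [replicate_succ]⟩

theorem IsBargraph.iuc_shape {k : ℕ} {v : List Step} (hb : IsBargraph v)
    (hi : iuc v = k) (hs : k + 3 ≤ semi v) :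
    (∃ a x, x.head? ≠ some H ∧ v = U :: (replicate k H ++ replicate (a + 1) U ++ H :: x)) ∨
      ∃ c y, v = U :: (replicate k H ++ replicate (c + 1) U ++ H :: H :: y) := by
  obtain ⟨q, rfl⟩ := hb.exists_eq_U_cons
  obtain ⟨j, z, hz, rfl⟩ := exists_eq_replicate_H_append q
  obtain rfl : k = j := by simpa [iuc, leadH_eq_zero hz] using hi.symm
  obtain ⟨a, t, rfl⟩ := hb.exists_rise_after_unit_columns hz (by omega)
  by_cases ht : t.head? = some H
  · obtain ⟨y, rfl⟩ : ∃ y, t = H :: y := by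
      rcases t with _ | ⟨_ | _ | _, y⟩ <;> simp_all
    exact .inr ⟨a, y, by simp⟩
  · exact .inl ⟨a, t, ht, by simp⟩

theorem isBargraph_replicate_U_append_iff (k a : ℕ) (x : List Step) :
    IsBargraph (replicate (a + 2) U ++ replicate (k + 1) H ++ x) ↔
      IsBargraph (U :: (replicate k H ++ replicate (a + 1) U ++ H :: x)) := by
  rw [replicate_succ (n := a + 1), replicate_succ' (n := k),
    show ∀ P Q : List Step, U :: P ++ (Q ++ [H]) ++ x = U :: (P ++ Q ++ H :: x) by simp]
  exact isBargraph_U_cons_append_H_cons_iff (by simp [mem_replicate]) (by simp [mem_replicate])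
    (by simp)

theorem isBargraph_U_cons_replicate_H_iff (k c : ℕ) (y : List Step) :
    IsBargraph (U :: (replicate (k + 1) H ++ replicate (c + 1) U ++ H :: y)) ↔
      IsBargraph (U :: (replicate k H ++ replicate (c + 1) U ++ H :: H :: y)) := by
  rw [show replicate k H ++ replicate (c + 1) U ++ H :: H :: y =
    replicate k H ++ replicate (c + 1) U ++ [H] ++ H :: y by simp]
  exact isBargraph_U_cons_append_H_cons_iff (by simp [mem_replicate]) (by simp [mem_replicate])
    (by simp)

def lhsToIuc (k : ℕ) (w : List Step) : List Step :=
  if 2 ≤ leadU w then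
    U :: (replicate k H ++ replicate (leadU w - 1) U ++ H :: w.drop (leadU w + k + 1))
  else
    let z := w.drop (k + 2)
    U :: (replicate k H ++ replicate (leadU z) U ++ H :: H :: z.drop (leadU z + 1))

def iucToLhs (k : ℕ) (v : List Step) : List Step :=
  let z := v.drop (k + 1)
  let t := z.drop (leadU z + 1)
  if t.head? = some H then U :: (replicate (k + 1) H ++ replicate (leadU z) U ++ H :: t.tail)
  else replicate (leadU z + 1) U ++ replicate (k + 1) H ++ t

theorem lhsToIuc_replicate_U_append (k a : ℕ) (x : List Step) :
    lhsToIuc k (replicate (a + 2) U ++ replicate (k + 1) H ++ x) =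
      U :: (replicate k H ++ replicate (a + 1) U ++ H :: x) := by
  have hU : leadU (replicate (a + 2) U ++ replicate (k + 1) H ++ x) = a + 2 := by
    simp [replicate_succ, leadU]
  rw [lhsToIuc, hU, if_pos le_add_self, drop_left' (by simp; omega)]
  rfl

theorem lhsToIuc_U_cons (k c : ℕ) (y : List Step) :
    lhsToIuc k (U :: (replicate (k + 1) H ++ replicate (c + 1) U ++ H :: y)) =
      U :: (replicate k H ++ replicate (c + 1) U ++ H :: H :: y) := by
  simp [lhsToIuc, replicate_succ, leadU, drop_append]

theorem iucToLhs_of_head?_ne {x : List Step} (k a : ℕ) (hx : x.head? ≠ some H) :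
    iucToLhs k (U :: (replicate k H ++ replicate (a + 1) U ++ H :: x)) =
      replicate (a + 2) U ++ replicate (k + 1) H ++ x := by
  simp [iucToLhs, replicate_succ, leadU, drop_append, hx]

theorem iucToLhs_H_cons (k c : ℕ) (y : List Step) :
    iucToLhs k (U :: (replicate k H ++ replicate (c + 1) U ++ H :: H :: y)) =
      U :: (replicate (k + 1) H ++ replicate (c + 1) U ++ H :: y) := by
  simp [iucToLhs, replicate_succ, leadU, drop_append]

theorem lhsToIuc_spec {k n : ℕ} {w : List Step} (hk : k + 3 ≤ n)
    (hw : IsBargraph w ∧ semi w = n ∧ lhsW w = k + 1) :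
    (IsBargraph (lhsToIuc k w) ∧ semi (lhsToIuc k w) = n ∧ iuc (lhsToIuc k w) = k) ∧
      iucToLhs k (lhsToIuc k w) = w := by
  obtain ⟨hb, rfl, hl⟩ := hw
  rcases hb.lhsW_shape hl hk with ⟨a, x, hx, rfl⟩ | ⟨c, y, rfl⟩
  · rw [lhsToIuc_replicate_U_append, iucToLhs_of_head?_ne k a hx]
    refine ⟨⟨(isBargraph_replicate_U_append_iff k a x).mp hb, ?_, ?_⟩, rfl⟩
    · simp [semi]
      omega
    · simp [iuc, replicate_succ, leadH]
  · rw [lhsToIuc_U_cons, iucToLhs_H_cons]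
    refine ⟨⟨(isBargraph_U_cons_replicate_H_iff k c y).mp hb, ?_, ?_⟩, rfl⟩
    · simp [semi]
      omega
    · simp [iuc, replicate_succ, leadH]

theorem iucToLhs_spec {k n : ℕ} {v : List Step} (hk : k + 3 ≤ n)
    (hv : IsBargraph v ∧ semi v = n ∧ iuc v = k) :
    (IsBargraph (iucToLhs k v) ∧ semi (iucToLhs k v) = n ∧ lhsW (iucToLhs k v) = k + 1) ∧
      lhsToIuc k (iucToLhs k v) = v := by
  obtain ⟨hb, rfl, hi⟩ := hv
  rcases hb.iuc_shape hi hk with ⟨a, x, hx, rfl⟩ | ⟨c, y, rfl⟩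
  · rw [iucToLhs_of_head?_ne k a hx, lhsToIuc_replicate_U_append]
    refine ⟨⟨(isBargraph_replicate_U_append_iff k a x).mpr hb, ?_, ?_⟩, rfl⟩
    · simp [semi]
      omega
    · simp [replicate_succ, lhsW, leadH_eq_zero hx]
  · rw [iucToLhs_H_cons, lhsToIuc_U_cons]
    refine ⟨⟨(isBargraph_U_cons_replicate_H_iff k c y).mpr hb, ?_, ?_⟩, rfl⟩
    · simp [semi]
      omega
    · simp [replicate_succ, lhsW, leadH]

def lhsIucEquiv {k n : ℕ} (hk : k + 3 ≤ n) :
    {w : List Step // IsBargraph w ∧ semi w = n ∧ lhsW w = k + 1} ≃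
      {v : List Step // IsBargraph v ∧ semi v = n ∧ iuc v = k} where
  toFun w := ⟨lhsToIuc k w, (lhsToIuc_spec hk w.2).1⟩
  invFun v := ⟨iucToLhs k v, (iucToLhs_spec hk v.2).1⟩
  left_inv w := Subtype.ext (lhsToIuc_spec hk w.2).2
  right_inv v := Subtype.ext (iucToLhs_spec hk v.2).2

end

/-- for `2 ≤ n` and `1 ≤ h ≤ n - 2`, bargraphs of semiperimeter `n` with
leftmost horizontal segment of width `h` are equinumerous with bargraphs of
semiperimeter `n` having exactly `h - 1` initial columns of height 1. -/
theorem lhs_iuc_equidistributed :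
    ∀ n h : ℕ, 2 ≤ n → 1 ≤ h → h ≤ n - 2 →
      Nat.card {w : List Step // IsBargraph w ∧ semi w = n ∧ lhsW w = h}
        = Nat.card {w : List Step // IsBargraph w ∧ semi w = n ∧ iuc w = h - 1} := by
  intro n h _ hh hhn
  obtain ⟨k, rfl⟩ : ∃ k, h = k + 1 := ⟨h - 1, by omega⟩
  rw [Nat.add_sub_cancel]
  exact Nat.card_congr (lhsIucEquiv (by omega))
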